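/- Let n ≥ 1, let G be a finite type with a distinguished reference element g̃ and depth function δ : G → ℕ with δ(g̃) = 0, let u : G × T → ℝ be a loading function, and let A(t) ⊆ G with g̃ ∈ A(t) for every t ∈ T. Let s : T → G be a strategy (s(t) ∈ A(t) for all t), let M be the unique block configuration such that s is constant on every block of M and takes distinct values on adjacent blocks, let R = {B ∈ M : s takes the value g̃ on B}, and let d = max_{t∈T} δ(s(t)). Then: (i) no two blocks of R are adjacent; (ii) #{t ∈ {1,…,n−1} : s(t) ≠ s(t−1)} = |M| − 1 and #{t ∈ T : s(t) ≠ g̃} = n − Σ_{B∈R} |B|; and (iii) LF1(d, M, R) ≤ max_{t∈T} u(s(t), t). -/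

import Mathlib

open scoped Classical

/-- A block in the horizon `{0,1,…,n-1}`: a nonempty set of consecutive integers
contained in `Finset.range n`. -/
def IsBlock (n : ℕ) (B : Finset ℕ) : Prop :=
  (∃ a b : ℕ, a ≤ b ∧ B = Finset.Icc a b) ∧ B ⊆ Finset.range n

/-- A block configuration of the horizon `{0,1,…,n-1}`: a finite collection of
pairwise disjoint blocks whose union is the whole horizon. -/
def IsBlockConfig (n : ℕ) (M : Finset (Finset ℕ)) : Prop :=
  (∀ B ∈ M, IsBlock n B) ∧
  (M : Set (Finset ℕ)).PairwiseDisjoint id ∧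
  M.sup id = Finset.range n

/-- `B` immediately precedes `B'`. -/
def Precedes (B B' : Finset ℕ) : Prop :=
  ∃ t ∈ B, (∀ u ∈ B, u ≤ t) ∧ (t + 1) ∈ B' ∧ (∀ u ∈ B', t + 1 ≤ u)

/-- Two blocks are adjacent if the end point of one immediately precedes the start
point of the other. -/
def AdjBlocks (B B' : Finset ℕ) : Prop := Precedes B B' ∨ Precedes B' B

/-- `LF₁(B, d)`: the best achievable worst-case loading on block `B` using a
topology available throughout `B` (i.e. in `A_B = ∩_{t∈B} A t`) of depth at most
`d`, computed in the extended reals (`+∞` if no such topology exists, and the inner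
maximum over an empty block is `−∞`). -/
noncomputable def blockLF {G : Type*} [Fintype G] (u : G → ℕ → ℝ) (A : ℕ → Finset G)
    (δ : G → ℕ) (d : ℕ) (B : Finset ℕ) : EReal :=
  (Finset.univ.filter (fun g : G => (∀ t ∈ B, g ∈ A t) ∧ δ g ≤ d)).inf
    (fun g => B.sup (fun t => ((u g t : ℝ) : EReal)))

/-- Worst-case loading of the reference topology `gref` over block `B`. -/
noncomputable def refLF {G : Type*} (u : G → ℕ → ℝ) (gref : G) (B : Finset ℕ) : EReal :=
  B.sup (fun t => ((u gref t : ℝ) : EReal))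

/-- `LF₁(d, M, R)`: the best achievable worst-case loading for block configuration
`M` with reference-block assignment `R ⊆ M`, depth bound `d`, computed in the
extended reals (minimum over an empty set is `+∞`, maximum over an empty collection
is `−∞`). -/
noncomputable def LF1 {G : Type*} [Fintype G] (u : G → ℕ → ℝ) (A : ℕ → Finset G)
    (δ : G → ℕ) (gref : G) (d : ℕ) (M R : Finset (Finset ℕ)) : EReal :=
  max ((M \ R).sup (blockLF u A δ d)) (R.sup (refLF u gref))

/-!
A strategy is read off block by block. A switch time `t` is exactly a time at which `t - 1`
and `t` lie in different blocks, i.e. the start of a block other than the one containing `0`,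
so switches correspond to blocks minus one. The times with `s t = g̃` are the disjoint union of
the blocks of `R`. Finally, on a block `B ∉ R` the constant value of `s` is itself an admissible
topology of depth at most `d`, and on a block of `R` it is `g̃`, so each term of `LF₁` is bounded
by the loading of `s` on that block.
-/

open Finset

namespace IsBlock

variable {n : ℕ} {B : Finset ℕ}

theorem nonempty (hB : IsBlock n B) : B.Nonempty := by
  obtain ⟨⟨a, b, hab, rfl⟩, -⟩ := hB
  exact ⟨a, mem_Icc.mpr ⟨le_rfl, hab⟩⟩

theorem le_of_mem_of_succ_notMem (hB : IsBlock n B) {t x : ℕ} (ht : t ∈ B)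
    (ht' : t + 1 ∉ B) (hx : x ∈ B) : x ≤ t := by
  obtain ⟨⟨a, b, -, rfl⟩, -⟩ := hB
  simp only [mem_Icc] at ht ht' hx
  omega

theorem succ_le_of_notMem_of_succ_mem (hB : IsBlock n B) {t x : ℕ} (ht : t ∉ B)
    (ht' : t + 1 ∈ B) (hx : x ∈ B) : t + 1 ≤ x := by
  obtain ⟨⟨a, b, -, rfl⟩, -⟩ := hB
  simp only [mem_Icc] at ht ht' hx
  omega

end IsBlock

theorem blockLF_le {G : Type*} [Fintype G] {u : G → ℕ → ℝ} {A : ℕ → Finset G} {δ : G → ℕ}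
    {d : ℕ} {B : Finset ℕ} {g : G} (hgA : ∀ t ∈ B, g ∈ A t) (hgδ : δ g ≤ d) :
    blockLF u A δ d B ≤ B.sup (fun t => ((u g t : ℝ) : EReal)) :=
  inf_le (mem_filter.mpr ⟨mem_univ g, hgA, hgδ⟩)

namespace IsBlockConfig

variable {n : ℕ} {M : Finset (Finset ℕ)} {B B' : Finset ℕ}

theorem subset_range (hM : IsBlockConfig n M) (hB : B ∈ M) : B ⊆ range n :=
  (hM.1 B hB).2

theorem nonempty (hM : IsBlockConfig n M) (hB : B ∈ M) : B.Nonempty :=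
  (hM.1 B hB).nonempty

theorem exists_mem (hM : IsBlockConfig n M) {t : ℕ} (ht : t < n) : ∃ B ∈ M, t ∈ B := by
  have : t ∈ M.sup id := hM.2.2 ▸ mem_range.mpr ht
  simpa using mem_sup.mp this

theorem eq_of_mem_of_mem (hM : IsBlockConfig n M) (hB : B ∈ M) (hB' : B' ∈ M) {t : ℕ}
    (ht : t ∈ B) (ht' : t ∈ B') : B = B' := by
  by_contra hne
  exact disjoint_left.mp (hM.2.1 hB hB' hne) ht ht'

theorem precedes_of_mem_of_succ_mem (hM : IsBlockConfig n M) (hB : B ∈ M) (hB' : B' ∈ M)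
    (hne : B ≠ B') {t : ℕ} (ht : t ∈ B) (ht' : t + 1 ∈ B') : Precedes B B' := by
  have hsucc : t + 1 ∉ B := fun h => hne (hM.eq_of_mem_of_mem hB hB' h ht')
  have hpred : t ∉ B' := fun h => hne (hM.eq_of_mem_of_mem hB hB' ht h)
  exact ⟨t, ht, fun x hx => (hM.1 B hB).le_of_mem_of_succ_notMem ht hsucc hx, ht',
    fun x hx => (hM.1 B' hB').succ_le_of_notMem_of_succ_mem hpred ht' hx⟩

theorem min'_eq_of_mem_of_succ_mem (hM : IsBlockConfig n M) (hB : B ∈ M) (hB' : B' ∈ M)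
    (hne : B ≠ B') {t : ℕ} (ht : t ∈ B) (ht' : t + 1 ∈ B') :
    B'.min' (hM.nonempty hB') = t + 1 := by
  have hpred : t ∉ B' := fun h => hne (hM.eq_of_mem_of_mem hB hB' ht h)
  exact le_antisymm (min'_le _ _ ht')
    ((hM.1 B' hB').succ_le_of_notMem_of_succ_mem hpred ht' (min'_mem _ _))

theorem exists_precedes_min' (hM : IsBlockConfig n M) (hB : B ∈ M) (h0 : 0 ∉ B) :
    ∃ t, B.min' (hM.nonempty hB) = t + 1 ∧ ∃ B' ∈ M, t ∈ B' ∧ Precedes B' B := by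
  have hmem := min'_mem B (hM.nonempty hB)
  obtain ⟨t, ht⟩ : ∃ t, B.min' (hM.nonempty hB) = t + 1 :=
    Nat.exists_eq_succ_of_ne_zero fun h => h0 (h ▸ hmem)
  have htn : t < n := by have := mem_range.mp (hM.subset_range hB hmem); omega
  obtain ⟨B', hB', htB'⟩ := hM.exists_mem htn
  have hne : B' ≠ B := by
    rintro rfl
    have := min'_le B' t htB'
    omega
  exact ⟨t, ht, B', hB', htB', hM.precedes_of_mem_of_succ_mem hB' hB hne htB' (ht ▸ hmem)⟩

theorem card_filter_zero_notMem (hM : IsBlockConfig n M) :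
    (M.filter (fun B => 0 ∉ B)).card = M.card - 1 := by
  have hsplit := card_filter_add_card_filter_not (s := M) (p := fun B => 0 ∈ B)
  rcases Nat.eq_zero_or_pos n with rfl | hn
  · have hM₀ : M = ∅ := eq_empty_of_forall_notMem fun B hB => by
      obtain ⟨t, ht⟩ := hM.nonempty hB
      simpa using hM.subset_range hB ht
    simp [hM₀]
  · obtain ⟨B₀, hB₀, h0⟩ := hM.exists_mem hn
    have hzero : M.filter (fun B => 0 ∈ B) = {B₀} := by
      ext B
      simp only [mem_filter, mem_singleton]
      exact ⟨fun ⟨hB, h0B⟩ => hM.eq_of_mem_of_mem hB hB₀ h0B h0, by rintro rfl; exact ⟨hB₀, h0⟩⟩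
    rw [hzero, card_singleton] at hsplit
    omega

variable {G : Type*} {s : ℕ → G}

theorem not_adjBlocks_of_forall_eq (hM : IsBlockConfig n M)
    (hadj : ∀ B ∈ M, ∀ B' ∈ M, AdjBlocks B B' → ∀ t ∈ B, ∀ t' ∈ B', s t ≠ s t')
    {g : G} (hB : B ∈ M) (hB' : B' ∈ M) (hBg : ∀ t ∈ B, s t = g) (hB'g : ∀ t ∈ B', s t = g) :
    ¬ AdjBlocks B B' := by
  intro h
  obtain ⟨t, ht⟩ := hM.nonempty hB
  obtain ⟨t', ht'⟩ := hM.nonempty hB'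
  exact hadj B hB B' hB' h t ht t' ht' ((hBg t ht).trans (hB'g t' ht').symm)

section Strategy

variable (hM : IsBlockConfig n M) (hconst : ∀ B ∈ M, ∀ t ∈ B, ∀ t' ∈ B, s t = s t')
include hM hconst

theorem card_filter_apply_ne_apply_pred
    (hadj : ∀ B ∈ M, ∀ B' ∈ M, AdjBlocks B B' → ∀ t ∈ B, ∀ t' ∈ B', s t ≠ s t') :
    ((Icc 1 (n - 1)).filter (fun t => s t ≠ s (t - 1))).card = M.card - 1 := by
  rw [← hM.card_filter_zero_notMem]
  symm
  refine card_bij (fun B hB => B.min' (hM.nonempty (mem_filter.mp hB).1)) ?_ ?_ ?_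
  · intro B hB
    obtain ⟨hBM, h0⟩ := mem_filter.mp hB
    obtain ⟨t, ht, B', hB', htB', hprec⟩ := hM.exists_precedes_min' hBM h0
    have hmem := min'_mem B (hM.nonempty hBM)
    have htn := mem_range.mp (hM.subset_range hBM hmem)
    rw [ht] at hmem htn ⊢
    refine mem_filter.mpr ⟨mem_Icc.mpr ⟨by omega, by omega⟩, ?_⟩
    simpa using hadj B hBM B' hB' (Or.inr hprec) (t + 1) hmem t htB'
  · intro B hB B' hB' heq
    exact hM.eq_of_mem_of_mem (mem_filter.mp hB).1 (mem_filter.mp hB').1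
      (heq ▸ min'_mem B _) (min'_mem B' _)
  · intro t ht
    obtain ⟨ht, hswitch⟩ := mem_filter.mp ht
    rw [mem_Icc] at ht
    obtain ⟨k, rfl⟩ : ∃ k, t = k + 1 := Nat.exists_eq_succ_of_ne_zero (by omega)
    rw [Nat.add_sub_cancel] at hswitch
    obtain ⟨B, hB, hkB⟩ := hM.exists_mem (show k < n by omega)
    obtain ⟨B', hB', hkB'⟩ := hM.exists_mem (show k + 1 < n by omega)
    have hne : B ≠ B' := by
      rintro rfl
      exact hswitch (hconst B hB _ hkB' _ hkB)
    have hmin := hM.min'_eq_of_mem_of_succ_mem hB hB' hne hkB hkB'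
    have h0 : 0 ∉ B' := fun h => by have := hmin ▸ min'_le B' 0 h; omega
    exact ⟨B', mem_filter.mpr ⟨hB', h0⟩, hmin⟩

theorem sum_card_filter_forall_eq (g : G) :
    ∑ B ∈ M.filter (fun B => ∀ t ∈ B, s t = g), B.card
      = ((range n).filter (fun t => s t = g)).card := by
  have hunion : (range n).filter (fun t => s t = g)
      = (M.filter (fun B => ∀ t ∈ B, s t = g)).biUnion id := by
    ext t
    simp only [mem_filter, mem_biUnion, mem_range, id_eq]
    constructor
    · rintro ⟨htn, hst⟩
      obtain ⟨B, hB, htB⟩ := hM.exists_mem htn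
      exact ⟨B, ⟨hB, fun t' ht' => (hconst B hB t' ht' t htB).trans hst⟩, htB⟩
    · rintro ⟨B, ⟨hB, hBg⟩, htB⟩
      exact ⟨mem_range.mp (hM.subset_range hB htB), hBg t htB⟩
  rw [hunion, card_biUnion fun B hB B' hB' hne =>
    hM.2.1 (mem_filter.mp hB).1 (mem_filter.mp hB').1 hne]
  rfl

theorem card_filter_ne (g : G) :
    ((range n).filter (fun t => s t ≠ g)).card
      = n - ∑ B ∈ M.filter (fun B => ∀ t ∈ B, s t = g), B.card := by
  have hsplit := card_filter_add_card_filter_not (s := range n) (p := fun t => s t = g)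
  rw [card_range] at hsplit
  rw [sum_card_filter_forall_eq hM hconst g]
  simp only [ne_eq]
  omega

end Strategy

theorem LF1_le [Fintype G] {u : G → ℕ → ℝ} {A : ℕ → Finset G} {δ : G → ℕ}
    (hM : IsBlockConfig n M) (hs : ∀ t ∈ range n, s t ∈ A t)
    (hconst : ∀ B ∈ M, ∀ t ∈ B, ∀ t' ∈ B, s t = s t') (gref : G) :
    LF1 u A δ gref ((range n).sup (fun t => δ (s t))) M
        (M.filter (fun B => ∀ t ∈ B, s t = gref))
      ≤ (range n).sup (fun t => ((u (s t) t : ℝ) : EReal)) := by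
  have hblock : ∀ B ∈ M, B.sup (fun t => ((u (s t) t : ℝ) : EReal))
      ≤ (range n).sup (fun t => ((u (s t) t : ℝ) : EReal)) :=
    fun B hB => sup_mono (hM.subset_range hB)
  refine max_le (Finset.sup_le fun B hB => ?_) (Finset.sup_le fun B hB => ?_)
  · have hBM := (mem_sdiff.mp hB).1
    obtain ⟨t₀, ht₀⟩ := hM.nonempty hBM
    have hs₀ : ∀ t ∈ B, s t₀ = s t := hconst B hBM t₀ ht₀
    calc blockLF u A δ _ B ≤ B.sup (fun t => ((u (s t₀) t : ℝ) : EReal)) :=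
          blockLF_le (fun t ht => hs₀ t ht ▸ hs t (hM.subset_range hBM ht))
            (le_sup (f := fun t => δ (s t)) (hM.subset_range hBM ht₀))
      _ = B.sup (fun t => ((u (s t) t : ℝ) : EReal)) :=
          sup_congr rfl fun t ht => by rw [hs₀ t ht]
      _ ≤ _ := hblock B hBM
  · obtain ⟨hBM, hBg⟩ := mem_filter.mp hB
    calc refLF u gref B = B.sup (fun t => ((u (s t) t : ℝ) : EReal)) :=
          sup_congr rfl fun t ht => by rw [hBg t ht]
      _ ≤ _ := hblock B hBM

end IsBlockConfig

theorem strategy_block_representation_general {G : Type*} [Fintype G] (n : ℕ)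
    (gref : G) (δ : G → ℕ) (u : G → ℕ → ℝ)
    (A : ℕ → Finset G)
    (s : ℕ → G) (hs : ∀ t ∈ Finset.range n, s t ∈ A t)
    (M : Finset (Finset ℕ)) (hM : IsBlockConfig n M)
    (hconst : ∀ B ∈ M, ∀ t ∈ B, ∀ t' ∈ B, s t = s t')
    (hadj : ∀ B ∈ M, ∀ B' ∈ M, AdjBlocks B B' → ∀ t ∈ B, ∀ t' ∈ B', s t ≠ s t') :
    (∀ B ∈ M.filter (fun B => ∀ t ∈ B, s t = gref),
      ∀ B' ∈ M.filter (fun B => ∀ t ∈ B, s t = gref), ¬ AdjBlocks B B') ∧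
    ((Finset.Icc 1 (n - 1)).filter (fun t => s t ≠ s (t - 1))).card = M.card - 1 ∧
    ((Finset.range n).filter (fun t => s t ≠ gref)).card
      = n - ∑ B ∈ M.filter (fun B => ∀ t ∈ B, s t = gref), B.card ∧
    LF1 u A δ gref ((Finset.range n).sup (fun t => δ (s t))) M
        (M.filter (fun B => ∀ t ∈ B, s t = gref))
      ≤ (Finset.range n).sup (fun t => ((u (s t) t : ℝ) : EReal)) :=
  ⟨fun _ hB _ hB' => hM.not_adjBlocks_of_forall_eq hadj (mem_filter.mp hB).1
      (mem_filter.mp hB').1 (mem_filter.mp hB).2 (mem_filter.mp hB').2,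
    hM.card_filter_apply_ne_apply_pred hconst hadj,
    hM.card_filter_ne hconst gref,
    hM.LF1_le hs hconst gref⟩

/-- For a strategy `s` with associated block configuration `M` (on whose blocks `s`
is constant, with distinct values on adjacent blocks), reference assignment
`R = {B ∈ M : s ≡ g̃ on B}` and depth `d = max_{t∈T} δ(s t)`:
(i) no two blocks of `R` are adjacent;
(ii) the number of switching time steps equals `|M| − 1` and the number of time
steps outside the reference topology equals `n − Σ_{B∈R} |B|`;
(iii) `LF₁(d, M, R) ≤ max_{t∈T} u(s t, t)`. -/
theorem strategy_block_representation {G : Type*} [Fintype G] (n : ℕ) (hn : 1 ≤ n)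
    (gref : G) (δ : G → ℕ) (hδ : δ gref = 0) (u : G → ℕ → ℝ)
    (A : ℕ → Finset G) (hA : ∀ t ∈ Finset.range n, gref ∈ A t)
    (s : ℕ → G) (hs : ∀ t ∈ Finset.range n, s t ∈ A t)
    (M : Finset (Finset ℕ)) (hM : IsBlockConfig n M)
    (hconst : ∀ B ∈ M, ∀ t ∈ B, ∀ t' ∈ B, s t = s t')
    (hadj : ∀ B ∈ M, ∀ B' ∈ M, AdjBlocks B B' → ∀ t ∈ B, ∀ t' ∈ B', s t ≠ s t') :
    (∀ B ∈ M.filter (fun B => ∀ t ∈ B, s t = gref),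
      ∀ B' ∈ M.filter (fun B => ∀ t ∈ B, s t = gref), ¬ AdjBlocks B B') ∧
    ((Finset.Icc 1 (n - 1)).filter (fun t => s t ≠ s (t - 1))).card = M.card - 1 ∧
    ((Finset.range n).filter (fun t => s t ≠ gref)).card
      = n - ∑ B ∈ M.filter (fun B => ∀ t ∈ B, s t = gref), B.card ∧
    LF1 u A δ gref ((Finset.range n).sup (fun t => δ (s t))) M
        (M.filter (fun B => ∀ t ∈ B, s t = gref))
      ≤ (Finset.range n).sup (fun t => ((u (s t) t : ℝ) : EReal)) :=
  strategy_block_representation_general n gref δ u A s hs M hM hconst hadj
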